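/- Let H be a complex Hilbert space, let P be a partition of H, and let p and q be closed subspaces of H that are not orthogonal to each other. Then there exists a cell r ∈ P such that r is not orthogonal to p and r is not orthogonal to q. -/

import Mathlib

variable {H : Type*} [NormedAddCommGroup H] [InnerProductSpace ℂ H]

/-- Two subspaces of a complex inner product space are orthogonal when every vector of
one is orthogonal to every vector of the other. -/
def Orth (p q : Submodule ℂ H) : Prop :=
  ∀ x ∈ p, ∀ y ∈ q, @inner ℂ H _ x y = 0

/-- A partition of `H` is a set of nonzero closed subspaces of `H` that are pairwise
orthogonal and whose supremum in the complete lattice of closed subspaces of `H`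
(i.e. the topological closure of the submodule supremum) is all of `H`. -/
def IsPartition (P : Set (Submodule ℂ H)) : Prop :=
  (∀ p ∈ P, p ≠ ⊥) ∧
  (∀ p ∈ P, IsClosed (p : Set H)) ∧
  (∀ p ∈ P, ∀ q ∈ P, p ≠ q → Orth p q) ∧
  (sSup P).topologicalClosure = ⊤

/-- `P₁` refines `P₂` when every cell of `P₁` is contained in some cell of `P₂`. -/
def Refines (P₁ P₂ : Set (Submodule ℂ H)) : Prop :=
  ∀ p ∈ P₁, ∃ q ∈ P₂, p ≤ q

/-- A multicell of a partition `P` is the supremum (in the lattice of closed subspaces)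
of a possibly empty subset of `P`. -/
def IsMulticell (P : Set (Submodule ℂ H)) (m : Submodule ℂ H) : Prop :=
  ∃ C ⊆ P, m = (sSup C).topologicalClosure


/-! Split the cells into those orthogonal to `p` and the rest, and let `K`, `L` be the
suprema of the two families. Under the contrary assumption every cell of the second family is
orthogonal to `q`, so `p ≤ Kᗮ` and `q ≤ Lᗮ`. Since `K ⟂ L` and `K ⊔ L` is dense, in a Hilbert
space `Kᗮ` is the closure `Lᗮᗮ` of `L`, hence `Kᗮ ⟂ Lᗮ` and so `p ⟂ q`. -/

namespace Submodule

variable {𝕜 E : Type*} [RCLike 𝕜] [NormedAddCommGroup E] [InnerProductSpace 𝕜 E]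
  [CompleteSpace E]

theorem IsOrtho.orthogonal_eq_orthogonal_orthogonal {K L : Submodule 𝕜 E} (hKL : K ⟂ L)
    (hdense : (K ⊔ L)ᗮ = ⊥) : Kᗮ = Lᗮᗮ := by
  have hle : Lᗮᗮ ≤ Kᗮ := orthogonal_le (isOrtho_iff_le.mp hKL)
  have hcompl : Lᗮᗮᗮ ⊓ Kᗮ = ⊥ := by
    rw [triorthogonal_eq_orthogonal, inf_orthogonal, sup_comm, hdense]
  rw [← sup_orthogonal_inf_of_hasOrthogonalProjection hle, hcompl, sup_bot_eq]

theorem IsOrtho.orthogonal_isOrtho_orthogonal {K L : Submodule 𝕜 E} (hKL : K ⟂ L)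
    (hdense : (K ⊔ L)ᗮ = ⊥) : Kᗮ ⟂ Lᗮ := by
  rw [hKL.orthogonal_eq_orthogonal_orthogonal hdense]
  exact isOrtho_orthogonal_left _

end Submodule

open Submodule

theorem orth_iff_isOrtho {p q : Submodule ℂ H} : Orth p q ↔ p ⟂ q :=
  isOrtho_iff_inner_eq.symm

theorem IsPartition.orthogonal_sSup_eq_bot {P : Set (Submodule ℂ H)} (hP : IsPartition P) :
    (sSup P)ᗮ = ⊥ := by
  rw [← orthogonal_closure, hP.2.2.2, top_orthogonal_eq_bot]

theorem IsPartition.sSup_isOrtho_sSup_of_disjoint {P A B : Set (Submodule ℂ H)}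
    (hP : IsPartition P) (hA : A ⊆ P) (hB : B ⊆ P) (hAB : Disjoint A B) :
    sSup A ⟂ sSup B :=
  isOrtho_sSup_left.mpr fun r hr => isOrtho_sSup_right.mpr fun s hs =>
    orth_iff_isOrtho.mp <| hP.2.2.1 r (hA hr) s (hB hs) <| by
      rintro rfl; exact hAB.ne_of_mem hr hs rfl

theorem exists_cell_not_orth_of_not_orth_general [CompleteSpace H]
    (P : Set (Submodule ℂ H)) (hP : IsPartition P)
    (p q : Submodule ℂ H)
    (hpq : ¬ Orth p q) :
    ∃ r ∈ P, ¬ Orth r p ∧ ¬ Orth r q := by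
  by_contra! hcells
  set A := {r ∈ P | Orth r p}
  set B := P \ A
  have hsup : sSup A ⊔ sSup B = sSup P := by
    rw [← sSup_union, Set.union_sdiff_cancel (Set.sep_subset _ _)]
  have hAB : sSup A ⟂ sSup B :=
    hP.sSup_isOrtho_sSup_of_disjoint (Set.sep_subset _ _) Set.sdiff_subset
      Set.disjoint_sdiff_right
  have hpA : p ≤ (sSup A)ᗮ := isOrtho_iff_le.mp <| isOrtho_sSup_right.mpr fun r hr =>
    (orth_iff_isOrtho.mp hr.2).symm
  have hqB : q ≤ (sSup B)ᗮ := isOrtho_iff_le.mp <| isOrtho_sSup_right.mpr fun r hr =>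
    (orth_iff_isOrtho.mp (hcells r hr.1 fun h => hr.2 ⟨hr.1, h⟩)).symm
  exact hpq <| orth_iff_isOrtho.mpr <|
    (hAB.orthogonal_isOrtho_orthogonal (hsup ▸ hP.orthogonal_sSup_eq_bot)).mono hpA hqB

/-- Let `H` be a complex Hilbert space, `P` a partition of `H`, and `p`, `q`
closed subspaces of `H` that are not orthogonal to each other.  Then some cell `r ∈ P` is
not orthogonal to `p` and not orthogonal to `q`. -/
theorem exists_cell_not_orth_of_not_orth [CompleteSpace H]
    (P : Set (Submodule ℂ H)) (hP : IsPartition P)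
    (p q : Submodule ℂ H) (hp : IsClosed (p : Set H)) (hq : IsClosed (q : Set H))
    (hpq : ¬ Orth p q) :
    ∃ r ∈ P, ¬ Orth r p ∧ ¬ Orth r q :=
  exists_cell_not_orth_of_not_orth_general P hP p q hpq
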